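/- arXiv:1606.00129 — 2 statements merged into one kernel-verified Lean document; each statement's English description precedes it below -/
import Mathlib

section
/- Let X and Y be geodesic metric spaces, let q : X → Y be a (K,C)-quasi-isometry, and let e ∈ X. Then for every Morse gauge N there is a Morse gauge N', depending only on N, K and C, such that the restriction of q to X^(N)_e is a (K,C)-quasi-isometric embedding of X^(N)_e into Y^(N')_{q(e)}. In particular, quasi-isometric geodesic metric spaces stably subsume each other, i.e. they are stably equivalent. -/
open Set Filter

section Defs

variable {X : Type*} [MetricSpace X]

/-- A geodesic segment of length `L`, parametrized by arc length on `[0, L]`. -/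
def IsGeodesicSeg (γ : ℝ → X) (L : ℝ) : Prop :=
  0 ≤ L ∧ ∀ s ∈ Icc (0:ℝ) L, ∀ t ∈ Icc (0:ℝ) L, dist (γ s) (γ t) = |s - t|

/-- A geodesic from `x` to `y`, parametrized by arc length on `[0, dist x y]`. -/
def IsGeodesicFromTo (γ : ℝ → X) (x y : X) : Prop :=
  IsGeodesicSeg γ (dist x y) ∧ γ 0 = x ∧ γ (dist x y) = y

/-- A geodesic ray, parametrized by arc length on `[0, ∞)`. -/
def IsGeodesicRay (ℓ : ℝ → X) : Prop :=
  ∀ s ∈ Ici (0:ℝ), ∀ t ∈ Ici (0:ℝ), dist (ℓ s) (ℓ t) = |s - t|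

/-- A geodesic metric space: any two points are joined by a geodesic. -/
def GeodesicSpace (X : Type*) [MetricSpace X] : Prop :=
  ∀ x y : X, ∃ γ : ℝ → X, IsGeodesicFromTo γ x y

/-- A `(K, C)`-quasi-geodesic defined on the interval `I ⊆ ℝ`. -/
def IsQuasiGeodesicOn (K C : ℝ) (I : Set ℝ) (σ : ℝ → X) : Prop :=
  ∀ s ∈ I, ∀ t ∈ I,
    |s - t| / K - C ≤ dist (σ s) (σ t) ∧ dist (σ s) (σ t) ≤ K * |s - t| + C

/-- A Morse gauge: a nonnegative real `N K C` for every `K ≥ 1`, `C ≥ 0`. -/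
def IsMorseGauge (N : ℝ → ℝ → ℝ) : Prop :=
  ∀ K C : ℝ, 1 ≤ K → 0 ≤ C → 0 ≤ N K C

/-- A subset `G ⊆ X` is `N`-Morse if for all `K ≥ 1`, `C ≥ 0`, every
`(K,C)`-quasi-geodesic with endpoints on `G` is contained in the closed
`N K C`-neighbourhood of `G`. -/
def IsMorseSet (N : ℝ → ℝ → ℝ) (G : Set X) : Prop :=
  ∀ K C : ℝ, 1 ≤ K → 0 ≤ C → ∀ a b : ℝ, a ≤ b → ∀ σ : ℝ → X,
    IsQuasiGeodesicOn K C (Icc a b) σ → σ a ∈ G → σ b ∈ G →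
    ∀ s ∈ Icc a b, ∃ g ∈ G, dist (σ s) g ≤ N K C

/-- An `N`-Morse geodesic from `x` to `y`. -/
def IsMorseGeodesicFromTo (N : ℝ → ℝ → ℝ) (γ : ℝ → X) (x y : X) : Prop :=
  IsGeodesicFromTo γ x y ∧ IsMorseSet N (γ '' Icc 0 (dist x y))

/-- An `N`-Morse geodesic ray. -/
def IsMorseRay (N : ℝ → ℝ → ℝ) (ℓ : ℝ → X) : Prop :=
  IsGeodesicRay ℓ ∧ IsMorseSet N (ℓ '' Ici 0)

/-- The stratum `X^(N)_e`: points joined to `e` by an `N`-Morse geodesic. -/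
def morseStratum (N : ℝ → ℝ → ℝ) (e : X) : Set X :=
  {y | ∃ γ : ℝ → X, IsMorseGeodesicFromTo N γ e y}

/-- The Gromov product `(x·y)_w`. -/
noncomputable def gprod (w x y : X) : ℝ := (dist w x + dist w y - dist x y) / 2

/-- A `B`-quasi-convex subset: geodesics with endpoints in `Y` stay in the
closed `B`-neighbourhood of `Y`. -/
def IsQuasiConvex (B : ℝ) (Y : Set X) : Prop :=
  ∀ x ∈ Y, ∀ y ∈ Y, ∀ γ : ℝ → X, IsGeodesicFromTo γ x y →
    ∀ s ∈ Icc (0:ℝ) (dist x y), ∃ g ∈ Y, dist (γ s) g ≤ B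

/-- An `N`-stable subset: quasi-convex, and any two of its points are joined
by an `N`-Morse geodesic of `X`. -/
def IsStableSubset (N : ℝ → ℝ → ℝ) (Y : Set X) : Prop :=
  (∃ B : ℝ, 0 ≤ B ∧ IsQuasiConvex B Y) ∧
    ∀ x ∈ Y, ∀ y ∈ Y, ∃ γ : ℝ → X, IsMorseGeodesicFromTo N γ x y

variable {Y : Type*} [MetricSpace Y]

/-- A `(K,C)`-quasi-isometric embedding. -/
def IsQIEmbedding (K C : ℝ) (q : X → Y) : Prop :=
  ∀ x x' : X,
    dist x x' / K - C ≤ dist (q x) (q x') ∧ dist (q x) (q x') ≤ K * dist x x' + C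

/-- A `(K,C)`-quasi-isometry. -/
def IsQuasiIsometry (K C : ℝ) (q : X → Y) : Prop :=
  IsQIEmbedding K C q ∧ ∀ y : Y, ∃ x : X, dist y (q x) ≤ C

end Defs

section Boundary

variable {X : Type*} [MetricSpace X]

/-- A sequence converges at infinity with respect to the basepoint `e`. -/
def ConvAtInf (e : X) (f : ℕ → X) : Prop :=
  Tendsto (fun p : ℕ × ℕ => gprod e (f p.1) (f p.2)) atTop atTop

/-- Two sequences converging at infinity are equivalent. -/
def EquivAtInf (e : X) (f g : ℕ → X) : Prop :=
  Tendsto (fun p : ℕ × ℕ => gprod e (f p.1) (g p.2)) atTop atTop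

/-- Sequences in `S` converging at infinity. -/
abbrev BSeq (S : Set X) (e : X) : Type _ :=
  {f : ℕ → X // (∀ n, f n ∈ S) ∧ ConvAtInf e f}

/-- The sequential boundary of `S ⊆ X` with basepoint `e`: sequences in `S`
converging at infinity, up to equivalence. -/
def SeqBoundary (S : Set X) (e : X) : Type _ :=
  Quot (fun f g : BSeq S e => EquivAtInf e f.1 g.1)

/-- The boundary point represented by a convergent sequence. -/
def SeqBoundary.mk {S : Set X} {e : X} (f : BSeq S e) : SeqBoundary S e :=
  Quot.mk _ f

/-- The liminf of Gromov products of two sequences, valued in `EReal`. -/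
noncomputable def seqGP (e : X) (f g : ℕ → X) : EReal :=
  Filter.liminf (fun p : ℕ × ℕ => ((gprod e (f p.1) (g p.2) : ℝ) : EReal)) atTop

/-- The Gromov product of two boundary points: the supremum over representing
sequences of the liminf of Gromov products. -/
noncomputable def bGP (S : Set X) (e : X) (ξ η : SeqBoundary S e) : EReal :=
  sSup {r : EReal | ∃ f g : BSeq S e,
    SeqBoundary.mk f = ξ ∧ SeqBoundary.mk g = η ∧ r = seqGP e f.1 g.1}

open Classical in
/-- `exp (−ε·r)` for an extended real `r`, with value `0` at `r = ⊤`. -/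
noncomputable def visGauge (ε : ℝ) (r : EReal) : ℝ :=
  if r = ⊤ then 0 else Real.exp (-ε * r.toReal)

/-- `d` is a visual metric on the sequential boundary of `S`:
a metric comparable to `exp(−ε·(Gromov product))` for some parameter `ε > 0`. -/
def IsVisualMetric (S : Set X) (e : X)
    (d : SeqBoundary S e → SeqBoundary S e → ℝ) : Prop :=
  (∀ ξ η, 0 ≤ d ξ η) ∧ (∀ ξ η, d ξ η = d η ξ) ∧
  (∀ ξ η ζ, d ξ ζ ≤ d ξ η + d η ζ) ∧ (∀ ξ η, d ξ η = 0 ↔ ξ = η) ∧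
  ∃ ε : ℝ, 0 < ε ∧ ∃ k₁ : ℝ, 0 < k₁ ∧ ∃ k₂ : ℝ, 0 < k₂ ∧
    ∀ ξ η, k₁ * visGauge ε (bGP S e ξ η) ≤ d ξ η ∧
      d ξ η ≤ k₂ * visGauge ε (bGP S e ξ η)

/-- `η` is (the restriction of) a self-homeomorphism of `[0,∞)`. -/
def IsHomeoIci (η : ℝ → ℝ) : Prop :=
  ContinuousOn η (Ici 0) ∧ StrictMonoOn η (Ici 0) ∧ η 0 = 0 ∧
    Tendsto η atTop atTop ∧ ∀ t ∈ Ici (0:ℝ), 0 ≤ η t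

/-- `F` is a quasi-symmetry onto its image, for the "distances" `dA`, `dB`. -/
def IsQuasiSymmetryOnto {A B : Type*} (dA : A → A → ℝ) (dB : B → B → ℝ)
    (F : A → B) : Prop :=
  Function.Injective F ∧ ∃ η : ℝ → ℝ, IsHomeoIci η ∧
    ∀ x y z : A, x ≠ y → x ≠ z → y ≠ z →
      dB (F x) (F y) / dB (F x) (F z) ≤ η (dA x y / dA x z)

end Boundary

/-- `X` (with basepoint `x`) is stably subsumed by `Y` (with basepoint `y`):
every stratum of `X` quasi-isometrically embeds in some stratum of `Y`. -/
def StablySubsumed (X Y : Type*) [MetricSpace X] [MetricSpace Y]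
    (x : X) (y : Y) : Prop :=
  ∀ N : ℝ → ℝ → ℝ, IsMorseGauge N →
    ∃ N' : ℝ → ℝ → ℝ, IsMorseGauge N' ∧
      ∃ K C : ℝ, 1 ≤ K ∧ 0 ≤ C ∧ ∃ f : X → Y,
        (∀ a ∈ morseStratum N x, f a ∈ morseStratum N' y) ∧
        ∀ a ∈ morseStratum N x, ∀ b ∈ morseStratum N x,
          dist a b / K - C ≤ dist (f a) (f b) ∧ dist (f a) (f b) ≤ K * dist a b + C

/-- Durham–Taylor stability of `f : Y → X`. -/
def DTStable {Y X : Type*} [MetricSpace Y] [MetricSpace X] (f : Y → X) : Prop :=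
  ∀ K C : ℝ, 1 ≤ K → 0 ≤ C → ∃ R : ℝ, 0 ≤ R ∧
    ∀ a₁ b₁ a₂ b₂ : ℝ, a₁ ≤ b₁ → a₂ ≤ b₂ → ∀ σ₁ σ₂ : ℝ → X,
      IsQuasiGeodesicOn K C (Icc a₁ b₁) σ₁ → IsQuasiGeodesicOn K C (Icc a₂ b₂) σ₂ →
      σ₁ a₁ = σ₂ a₂ → σ₁ b₁ = σ₂ b₂ →
      σ₁ a₁ ∈ Set.range f → σ₁ b₁ ∈ Set.range f →
      (∀ s ∈ Icc a₁ b₁, ∃ t ∈ Icc a₂ b₂, dist (σ₁ s) (σ₂ t) ≤ R) ∧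
      (∀ t ∈ Icc a₂ b₂, ∃ s ∈ Icc a₁ b₁, dist (σ₁ s) (σ₂ t) ≤ R)


/-!
Push an `N`-Morse geodesic `γ` from `e` to `a` forward along `q`. The quasi-geodesic `q ∘ γ`
again has Morse image: a quasi-geodesic of `Y` with endpoints on it pulls back, along a coarse
inverse of `q`, to a quasi-geodesic of `X` with endpoints near `γ`, which therefore stays near `γ`.
A geodesic of `Y` from `q e` to `q a` stays near `q ∘ γ` by this Morse property and, conversely,
`q ∘ γ` stays near the geodesic by a discrete intermediate value argument. Sets at bounded
Hausdorff distance from a Morse set are Morse, with a gauge depending only on the original gauge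
and the distance, so the geodesic is Morse. For the reverse subsumption, apply the same argument
to a coarse inverse of `q` that sends `q e` to `e`.
-/

section QuasiIsometries

variable {X Y : Type*} [MetricSpace X] [MetricSpace Y] {q : X → Y} {K C : ℝ}

theorem IsGeodesicSeg.isQuasiGeodesicOn {γ : ℝ → X} {L : ℝ} (hγ : IsGeodesicSeg γ L) :
    IsQuasiGeodesicOn 1 0 (Icc 0 L) γ := by
  intro s hs t ht
  simp [hγ.2 s hs t ht]

theorem IsQIEmbedding.dist_le (hq : IsQIEmbedding K C q) (hK : 0 < K) (x x' : X) :
    dist x x' ≤ K * dist (q x) (q x') + K * C := by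
  have h := (hq x x').1
  rw [sub_le_iff_le_add, div_le_iff₀ hK] at h
  linarith

theorem IsQIEmbedding.comp_isQuasiGeodesicOn (hq : IsQIEmbedding K C q) (hK : 1 ≤ K)
    {K' C' : ℝ} {I : Set ℝ} {σ : ℝ → X} (hσ : IsQuasiGeodesicOn K' C' I σ) (hC' : 0 ≤ C') :
    IsQuasiGeodesicOn (K * K') (K * C' + C) I (q ∘ σ) := by
  have hK0 : 0 < K := by linarith
  intro s hs t ht
  obtain ⟨hlo, hup⟩ := hσ s hs t ht
  obtain ⟨hqlo, hqup⟩ := hq (σ s) (σ t)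
  have hdiv : (|s - t| / K' - C') / K ≤ dist (σ s) (σ t) / K := by gcongr
  have hC'K : C' / K ≤ K * C' := (div_le_self hC' hK).trans (le_mul_of_one_le_left hC' hK)
  have hKK' : |s - t| / (K * K') = (|s - t| / K') / K := by rw [div_div, mul_comm]
  refine ⟨?_, ?_⟩
  · rw [sub_div] at hdiv
    rw [Function.comp_apply, Function.comp_apply, hKK']
    linarith
  · calc dist ((q ∘ σ) s) ((q ∘ σ) t) ≤ K * (K' * |s - t| + C') + C :=
          hqup.trans (by gcongr)
      _ = K * K' * |s - t| + (K * C' + C) := by ring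

variable {f : Y → X}

theorem IsQIEmbedding.dist_apply_map_le (hq : IsQIEmbedding K C q) (hK : 0 < K)
    (hf : ∀ y, dist y (q (f y)) ≤ C) (x : X) : dist (f (q x)) x ≤ 2 * K * C := by
  have h := hf (q x)
  rw [dist_comm] at h
  nlinarith [hq.dist_le hK (f (q x)) x]

theorem IsQIEmbedding.isQuasiIsometry_of_forall_dist_le (hq : IsQIEmbedding K C q)
    (hK : 1 ≤ K) (hC : 0 ≤ C) (hf : ∀ y, dist y (q (f y)) ≤ C) :
    IsQuasiIsometry K (3 * K * C) f := by
  have hK0 : 0 < K := by linarith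
  have hqf : ∀ y y', |dist (q (f y)) (q (f y')) - dist y y'| ≤ 2 * C := fun y y' => by
    have h := dist_dist_dist_le (q (f y)) (q (f y')) y y'
    rw [Real.dist_eq] at h
    linarith [hf y, hf y', dist_comm (q (f y)) y, dist_comm (q (f y')) y']
  refine ⟨fun y y' => ⟨?_, ?_⟩, fun x => ⟨q x, ?_⟩⟩
  · have h : dist y y' - 3 * C ≤ K * dist (f y) (f y') := by
      linarith [(abs_le.1 (hqf y y')).1, (hq (f y) (f y')).2]
    have h3 : 3 * C / K ≤ 3 * K * C := by
      rw [div_le_iff₀ hK0]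
      nlinarith [one_le_mul_of_one_le_of_one_le hK hK]
    have h' : dist y y' / K ≤ dist (f y) (f y') + 3 * C / K := by
      rw [div_le_iff₀ hK0, add_mul, div_mul_cancel₀ _ hK0.ne']
      linarith
    linarith
  · nlinarith [hq.dist_le hK0 (f y) (f y'), (abs_le.1 (hqf y y')).2]
  · rw [dist_comm]
    nlinarith [hq.dist_apply_map_le hK0 hf x]

theorem IsQuasiIsometry.exists_coarseInverse (hq : IsQuasiIsometry K C q) (hC : 0 ≤ C)
    (x₀ : X) : ∃ f : Y → X, f (q x₀) = x₀ ∧ ∀ y, dist y (q (f y)) ≤ C := by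
  classical
  choose g hg using hq.2
  refine ⟨Function.update g (q x₀) x₀, Function.update_self .., fun y => ?_⟩
  rcases eq_or_ne y (q x₀) with rfl | hy
  · simpa using hC
  · simpa [Function.update_of_ne hy] using hg y

end QuasiIsometries

section MorseSets

variable {X : Type*} [MetricSpace X]

theorem IsQuasiGeodesicOn.of_dist_comp_le {K C D : ℝ} {I J : Set ℝ} {σ σ' : ℝ → X}
    {c : ℝ → ℝ} (hσ : IsQuasiGeodesicOn K C J σ) (hK : 1 ≤ K) (hcJ : MapsTo c I J)
    (hc : LipschitzWith 1 c) (hc₁ : ∀ s ∈ I, |s - c s| ≤ 1)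
    (hD : ∀ s ∈ I, dist (σ' s) (σ (c s)) ≤ D) :
    IsQuasiGeodesicOn K (C + 2 * D + 2) I σ' := by
  have hK0 : 0 < K := by linarith
  intro s hs t ht
  have hcst : |c s - c t| ≤ |s - t| := by simpa [Real.dist_eq] using hc.dist_le_mul s t
  have hst : |s - t| ≤ |c s - c t| + 2 := by
    have h₁ := abs_sub_le s (c s) t
    have h₂ := abs_sub_le (c s) (c t) t
    have h₃ := hc₁ t ht
    rw [abs_sub_comm] at h₃
    linarith [hc₁ s hs]
  have hclose : |dist (σ' s) (σ' t) - dist (σ (c s)) (σ (c t))| ≤ 2 * D := by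
    have h := dist_dist_dist_le (σ' s) (σ' t) (σ (c s)) (σ (c t))
    rw [Real.dist_eq] at h
    linarith [hD s hs, hD t ht]
  obtain ⟨hlo, hup⟩ := hσ (c s) (hcJ hs) (c t) (hcJ ht)
  have hdiv : |s - t| / K ≤ |c s - c t| / K + 2 := by
    calc |s - t| / K ≤ |c s - c t| / K + 2 / K := by rw [← add_div]; gcongr
      _ ≤ |c s - c t| / K + 2 := by gcongr; exact div_le_self zero_le_two hK
  have hmul : K * |c s - c t| ≤ K * |s - t| := by gcongr
  constructor <;> linarith [abs_le.1 hclose]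

/-- The proof extends `σ` by constant pieces of length one at both ends, which turns it into a
quasi-geodesic with endpoints on `G`. -/
theorem IsMorseSet.exists_dist_le_of_endpoints {N : ℝ → ℝ → ℝ} {G : Set X}
    (hG : IsMorseSet N G) {K C D a b : ℝ} (hK : 1 ≤ K) (hC : 0 ≤ C) (hD : 0 ≤ D) (hab : a ≤ b)
    {σ : ℝ → X} (hσ : IsQuasiGeodesicOn K C (Icc a b) σ) {ga gb : X} (hga : ga ∈ G)
    (hgb : gb ∈ G) (hda : dist (σ a) ga ≤ D) (hdb : dist (σ b) gb ≤ D) :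
    ∀ s ∈ Icc a b, ∃ g ∈ G, dist (σ s) g ≤ N K (C + 2 * D + 2) := by
  classical
  set σ' : ℝ → X := fun t => if t < a then ga else if b < t then gb else σ t with hσ'
  set c : ℝ → ℝ := Subtype.val ∘ projIcc a b hab
  have hσ'_of_mem : ∀ t ∈ Icc a b, σ' t = σ t := fun t ht => by
    simp [hσ', not_lt.2 ht.1, not_lt.2 ht.2]
  have hclose : ∀ t ∈ Icc (a - 1) (b + 1), dist (σ' t) (σ (c t)) ≤ D ∧ |t - c t| ≤ 1 := by
    rintro t ⟨ht₁, ht₂⟩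
    rcases lt_or_ge t a with hta | hat
    · have hct : c t = a := by simp [c, projIcc_of_le_left hab hta.le]
      simp only [hσ', if_pos hta, hct, dist_comm ga]
      exact ⟨hda, abs_le.2 ⟨by linarith, by linarith⟩⟩
    rcases lt_or_ge b t with hbt | htb
    · have hct : c t = b := by simp [c, projIcc_of_right_le hab hbt.le]
      simp only [hσ', if_neg (not_lt.2 hat), if_pos hbt, hct, dist_comm gb]
      exact ⟨hdb, abs_le.2 ⟨by linarith, by linarith⟩⟩
    · have hct : c t = t := by simp [c, projIcc_of_mem hab ⟨hat, htb⟩]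
      rw [hσ'_of_mem t ⟨hat, htb⟩, hct]
      simpa using hD
  have hσ'qg : IsQuasiGeodesicOn K (C + 2 * D + 2) (Icc (a - 1) (b + 1)) σ' :=
    hσ.of_dist_comp_le (c := c) hK (fun t _ => (projIcc a b hab t).2)
      (by simpa only [one_mul] using
        (LipschitzWith.subtype_val _).comp (LipschitzWith.projIcc hab))
      (fun t ht => (hclose t ht).2) (fun t ht => (hclose t ht).1)
  intro s hs
  have h := hG K _ hK (by positivity) _ _ (by linarith) σ' hσ'qg
    (by simpa [hσ'] using hga) (by simpa [hσ', not_lt.2 (by linarith : a ≤ b + 1)] using hgb)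
    s ⟨by linarith [hs.1], by linarith [hs.2]⟩
  rwa [hσ'_of_mem s hs] at h

theorem IsMorseSet.of_forall_exists_dist_le {N : ℝ → ℝ → ℝ} {G H : Set X} (hG : IsMorseSet N G)
    {D D' : ℝ} (hD : 0 ≤ D) (hHG : ∀ h ∈ H, ∃ g ∈ G, dist h g ≤ D)
    (hGH : ∀ g ∈ G, ∃ h ∈ H, dist g h ≤ D') :
    IsMorseSet (fun K C => N K (C + 2 * D + 2) + D') H := by
  intro K C hK hC a b hab σ hσ ha hb s hs
  obtain ⟨ga, hga, hda⟩ := hHG _ ha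
  obtain ⟨gb, hgb, hdb⟩ := hHG _ hb
  obtain ⟨g, hg, hdg⟩ := hG.exists_dist_le_of_endpoints hK hC hD hab hσ hga hgb hda hdb s hs
  obtain ⟨h, hh, hdh⟩ := hGH g hg
  exact ⟨h, hh, (dist_triangle _ g h).trans (add_le_add hdg hdh)⟩

theorem exists_mem_Icc_of_le_add {s : ℕ → ℝ} {u δ : ℝ} (hδ : 0 ≤ δ)
    (hs : ∀ i, s (i + 1) ≤ s i + δ) (h₀ : s 0 ≤ u) {n : ℕ} (hn : u ≤ s n) :
    ∃ i, s i ∈ Icc u (u + δ) := by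
  induction n with
  | zero => exact ⟨0, hn, by linarith⟩
  | succ n ih =>
    by_cases h : u ≤ s n
    · exact ih h
    · exact ⟨n + 1, hn, by linarith [hs n, not_le.1 h]⟩

/-- Sample `τ` at the points `min i M`, which are at most `1` apart, and pick parameters of `σ`
near them; these have steps bounded in terms of the constants, so one of them is close to `u`. -/
theorem IsQuasiGeodesicOn.exists_dist_le_of_forall_exists_dist_le {K₁ C₁ K₂ C₂ L M R : ℝ}
    {σ τ : ℝ → X} (hσ : IsQuasiGeodesicOn K₁ C₁ (Icc 0 L) σ)
    (hτ : IsQuasiGeodesicOn K₂ C₂ (Icc 0 M) τ) (hK₁ : 0 < K₁) (hK₂ : 0 ≤ K₂) (hL : 0 ≤ L)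
    (hM : 0 ≤ M) (h₀ : τ 0 = σ 0) (h₁ : τ M = σ L)
    (hτσ : ∀ t ∈ Icc 0 M, ∃ s ∈ Icc 0 L, dist (τ t) (σ s) ≤ R) :
    ∀ u ∈ Icc 0 L, ∃ t ∈ Icc 0 M,
      dist (σ u) (τ t) ≤ K₁ * (K₁ * (2 * R + K₂ + C₂ + C₁)) + C₁ + R := by
  intro u hu
  have hR : 0 ≤ R := by
    obtain ⟨s, -, hs⟩ := hτσ 0 ⟨le_rfl, hM⟩
    exact dist_nonneg.trans hs
  set n := ⌈M⌉₊ + 1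
  set t : ℕ → ℝ := fun i => min (i : ℝ) M with ht_def
  have ht : ∀ i, t i ∈ Icc 0 M := fun i => ⟨le_min i.cast_nonneg hM, min_le_right _ _⟩
  have ht_succ : ∀ i, |t (i + 1) - t i| ≤ 1 := fun i => by
    simpa [t] using abs_min_sub_min_le_max ((i : ℝ) + 1) M i M
  have hsample : ∀ i, ∃ s ∈ Icc 0 L,
      dist (τ (t i)) (σ s) ≤ R ∧ (i = 0 → s = 0) ∧ (n ≤ i → s = L) := by
    intro i
    rcases Nat.eq_zero_or_pos i with rfl | hi
    · refine ⟨0, ⟨le_rfl, hL⟩, by simpa [ht_def, hM, h₀] using hR, fun _ => rfl, fun h => ?_⟩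
      omega
    by_cases hni : n ≤ i
    · have htM : t i = M := min_eq_right <| (Nat.le_ceil M).trans <| by
        exact_mod_cast (Nat.le_succ _).trans hni
      exact ⟨L, ⟨hL, le_rfl⟩, by simpa [htM, h₁] using hR, fun h => by omega, fun _ => rfl⟩
    · obtain ⟨s, hs, hds⟩ := hτσ (t i) (ht i)
      exact ⟨s, hs, hds, fun h => by omega, fun h => absurd h hni⟩
  choose sf hsf hdsf hsf₀ hsfn using hsample
  have hstep : ∀ i, sf (i + 1) ≤ sf i + K₁ * (2 * R + K₂ + C₂ + C₁) := fun i => by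
    have hττ : dist (τ (t (i + 1))) (τ (t i)) ≤ K₂ + C₂ := by
      have h := (hτ _ (ht (i + 1)) _ (ht i)).2
      nlinarith [ht_succ i]
    have hσσ := (hσ _ (hsf (i + 1)) _ (hsf i)).1
    have htri := dist_triangle4 (σ (sf (i + 1))) (τ (t (i + 1))) (τ (t i)) (σ (sf i))
    have h : |sf (i + 1) - sf i| / K₁ ≤ 2 * R + K₂ + C₂ + C₁ := by
      linarith [hdsf i, hdsf (i + 1), dist_comm (σ (sf (i + 1))) (τ (t (i + 1)))]
    rw [div_le_iff₀ hK₁] at h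
    linarith [le_abs_self (sf (i + 1) - sf i)]
  have hC₁ : 0 ≤ C₁ := by simpa using (hσ 0 ⟨le_rfl, hL⟩ 0 ⟨le_rfl, hL⟩).2
  have hC₂ : 0 ≤ C₂ := by simpa using (hτ 0 ⟨le_rfl, hM⟩ 0 ⟨le_rfl, hM⟩).2
  obtain ⟨i, hi⟩ := exists_mem_Icc_of_le_add (by positivity) hstep
    (by rw [hsf₀ 0 rfl]; exact hu.1) (hn := (hsfn n le_rfl).symm ▸ hu.2)
  have hui : |u - sf i| ≤ K₁ * (2 * R + K₂ + C₂ + C₁) := by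
    rw [abs_sub_comm, abs_le]
    constructor <;> linarith [hi.1, hi.2]
  refine ⟨t i, ht i, ?_⟩
  calc dist (σ u) (τ (t i)) ≤ dist (σ u) (σ (sf i)) + dist (τ (t i)) (σ (sf i)) :=
        dist_triangle_right _ _ _
    _ ≤ K₁ * |u - sf i| + C₁ + R := add_le_add (hσ u hu _ (hsf i)).2 (hdsf i)
    _ ≤ K₁ * (K₁ * (2 * R + K₂ + C₂ + C₁)) + C₁ + R := by gcongr

end MorseSets

section Strata

variable {X Y : Type*} [MetricSpace X] [MetricSpace Y] {q : X → Y} {K C : ℝ}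

def qiImageGauge (N : ℝ → ℝ → ℝ) (K C : ℝ) : ℝ → ℝ → ℝ :=
  fun K' C' => K * N (K * K') (K * C' + 7 * K * C + 2) + 2 * C

/-- `D` is the constant of `IsQuasiGeodesicOn.exists_dist_le_of_forall_exists_dist_le` for a
`(K, C)`-quasi-geodesic, a geodesic, and `R = qiImageGauge N K C 1 0`. -/
def qiGauge (N : ℝ → ℝ → ℝ) (K C : ℝ) : ℝ → ℝ → ℝ :=
  let R := qiImageGauge N K C 1 0
  let D := K * (K * (2 * R + 1 + C)) + C + R
  fun K' C' => qiImageGauge N K C K' (C' + 2 * R + 2) + D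

theorem isMorseGauge_qiImageGauge {N : ℝ → ℝ → ℝ} (hN : IsMorseGauge N) (hK : 1 ≤ K)
    (hC : 0 ≤ C) : IsMorseGauge (qiImageGauge N K C) := by
  intro K' C' hK' hC'
  have := hN (K * K') (K * C' + 7 * K * C + 2) (one_le_mul_of_one_le_of_one_le hK hK')
    (by positivity)
  unfold qiImageGauge
  positivity

theorem isMorseGauge_qiGauge {N : ℝ → ℝ → ℝ} (hN : IsMorseGauge N) (hK : 1 ≤ K) (hC : 0 ≤ C) :
    IsMorseGauge (qiGauge N K C) := by
  have hN₁ := isMorseGauge_qiImageGauge hN hK hC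
  have hR := hN₁ 1 0 le_rfl le_rfl
  intro K' C' hK' hC'
  have := hN₁ K' (C' + 2 * qiImageGauge N K C 1 0 + 2) hK' (by positivity)
  simp only [qiGauge]
  positivity

theorem IsMorseSet.image_of_isQuasiIsometry {N : ℝ → ℝ → ℝ} {G : Set X} (hG : IsMorseSet N G)
    (hq : IsQuasiIsometry K C q) (hK : 1 ≤ K) (hC : 0 ≤ C) :
    IsMorseSet (qiImageGauge N K C) (q '' G) := by
  have hK0 : 0 < K := by linarith
  choose f hf using hq.2
  have hfq := (hq.1.isQuasiIsometry_of_forall_dist_le hK hC hf).1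
  rintro K' C' hK' hC' a b hab σ hσ ⟨ga, hga, hqa⟩ ⟨gb, hgb, hqb⟩ s hs
  have hfσ := hfq.comp_isQuasiGeodesicOn hK hσ hC'
  have hend : ∀ {t g}, q g = σ t → dist ((f ∘ σ) t) g ≤ 2 * K * C := fun h => by
    simpa [← h] using hq.1.dist_apply_map_le hK0 hf _
  obtain ⟨g, hg, hdg⟩ := hG.exists_dist_le_of_endpoints (one_le_mul_of_one_le_of_one_le hK hK')
    (by positivity) (by positivity) hab hfσ hga hgb (hend hqa) (hend hqb) s hs
  refine ⟨q g, mem_image_of_mem q hg, ?_⟩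
  calc dist (σ s) (q g) ≤ dist (σ s) (q (f (σ s))) + dist (q (f (σ s))) (q g) :=
        dist_triangle _ _ _
    _ ≤ C + (K * N (K * K') (K * C' + 3 * K * C + 2 * (2 * K * C) + 2) + C) :=
        add_le_add (hf _) ((hq.1 _ _).2.trans (by gcongr; exact hdg))
    _ = qiImageGauge N K C K' C' := by
        rw [qiImageGauge, show K * C' + 3 * K * C + 2 * (2 * K * C) + 2 = K * C' + 7 * K * C + 2
          by ring]
        ring

theorem IsQuasiIsometry.mapsTo_morseStratum (hq : IsQuasiIsometry K C q) (hK : 1 ≤ K)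
    (hC : 0 ≤ C) (hY : GeodesicSpace Y) (N : ℝ → ℝ → ℝ) (e : X) :
    MapsTo q (morseStratum N e) (morseStratum (qiGauge N K C) (q e)) := by
  rintro a ⟨γ, ⟨hγ, hγe, hγa⟩, hγN⟩
  have hqγ : IsQuasiGeodesicOn K C (Icc 0 (dist e a)) (q ∘ γ) := by
    simpa using hq.1.comp_isQuasiGeodesicOn hK hγ.isQuasiGeodesicOn le_rfl
  have hH : IsMorseSet (qiImageGauge N K C) ((q ∘ γ) '' Icc 0 (dist e a)) := by
    rw [image_comp]
    exact hγN.image_of_isQuasiIsometry hq hK hC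
  obtain ⟨γ', hγ', hγ'e, hγ'a⟩ := hY (q e) (q a)
  refine ⟨γ', ⟨hγ', hγ'e, hγ'a⟩, ?_⟩
  have hnear : ∀ t ∈ Icc 0 (dist (q e) (q a)), ∃ s ∈ Icc 0 (dist e a),
      dist (γ' t) ((q ∘ γ) s) ≤ qiImageGauge N K C 1 0 := by
    intro t ht
    obtain ⟨_, ⟨s, hs, rfl⟩, h⟩ := hH 1 0 le_rfl le_rfl _ _ hγ'.1 γ' hγ'.isQuasiGeodesicOn
      (by rw [hγ'e]; exact ⟨0, ⟨le_rfl, hγ.1⟩, by simp [hγe]⟩)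
      (by rw [hγ'a]; exact ⟨dist e a, ⟨hγ.1, le_rfl⟩, by simp [hγa]⟩) t ht
    exact ⟨s, hs, h⟩
  have hfar := hqγ.exists_dist_le_of_forall_exists_dist_le hγ'.isQuasiGeodesicOn (by linarith)
    zero_le_one hγ.1 hγ'.1 (by simp [hγe, hγ'e]) (by simp [hγa, hγ'a]) hnear
  simp only [add_zero] at hfar
  obtain ⟨s, -, hs⟩ := hnear 0 ⟨le_rfl, hγ'.1⟩
  refine hH.of_forall_exists_dist_le (dist_nonneg.trans hs) ?_ ?_
  · rintro _ ⟨t, ht, rfl⟩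
    obtain ⟨s, hs, h⟩ := hnear t ht
    exact ⟨_, mem_image_of_mem _ hs, h⟩
  · rintro _ ⟨s, hs, rfl⟩
    obtain ⟨t, ht, h⟩ := hfar s hs
    exact ⟨_, mem_image_of_mem _ ht, h⟩

theorem IsQuasiIsometry.stablySubsumed (hq : IsQuasiIsometry K C q) (hK : 1 ≤ K) (hC : 0 ≤ C)
    (hY : GeodesicSpace Y) (x : X) : StablySubsumed X Y x (q x) := fun N hN =>
  ⟨qiGauge N K C, isMorseGauge_qiGauge hN hK hC, K, C, hK, hC, q,
    hq.mapsTo_morseStratum hK hC hY N x, fun a _ b _ => hq.1 a b⟩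

end Strata

/-- a `(K,C)`-quasi-isometry restricts to a `(K,C)`-quasi-isometric
embedding `X^(N)_e → Y^(N')_{q e}` with `N'` depending only on `N, K, C`; in
particular quasi-isometric geodesic spaces stably subsume each other. -/
theorem statement3 (N : ℝ → ℝ → ℝ) (hN : IsMorseGauge N)
    (K C : ℝ) (hK : 1 ≤ K) (hC : 0 ≤ C) :
    ∃ N' : ℝ → ℝ → ℝ, IsMorseGauge N' ∧
      ∀ (X Y : Type*) [MetricSpace X] [MetricSpace Y],
        GeodesicSpace X → GeodesicSpace Y →
        ∀ q : X → Y, IsQuasiIsometry K C q → ∀ e : X,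
          (∀ a ∈ morseStratum N e, q a ∈ morseStratum N' (q e)) ∧
          (∀ a ∈ morseStratum N e, ∀ b ∈ morseStratum N e,
            dist a b / K - C ≤ dist (q a) (q b) ∧
              dist (q a) (q b) ≤ K * dist a b + C) ∧
          StablySubsumed X Y e (q e) ∧ StablySubsumed Y X (q e) e := by
  refine ⟨qiGauge N K C, isMorseGauge_qiGauge hN hK hC, fun X Y _ _ hX hY q hq e => ?_⟩
  obtain ⟨f, hfe, hf⟩ := hq.exists_coarseInverse hC e
  have hf' : IsQuasiIsometry K (3 * K * C) f := hq.1.isQuasiIsometry_of_forall_dist_le hK hC hf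
  refine ⟨hq.mapsTo_morseStratum hK hC hY N e, fun a _ b _ => hq.1 a b,
    hq.stablySubsumed hK hC hY e, ?_⟩
  simpa only [hfe] using hf'.stablySubsumed hK (by positivity) hX (q e)
end

section
/- Let X be a geodesic metric space, e ∈ X, and let N ≤ N' be Morse gauges (pointwise order). Let ι : ∂X^(N)_e → ∂X^(N')_e be the map induced by the inclusion X^(N)_e ⊆ X^(N')_e. Then for all x, y ∈ ∂X^(N)_e one has (x·y)^N_e ≤ (ι(x)·ι(y))^{N'}_e ≤ (x·y)^N_e + 32N'(3,0). -/
open Set Filter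

/-!
Morse geodesics from `e` to `a` and to `b` fellow travel up to time `(a·b)_e - 2 N(3,0)`: both
stay `N(3,0)`-close to the `(3,0)`-quasi-geodesics that run from `e` to a closest point `z` of a
geodesic `[a, b]` and then along `[a, b]`, and `(a·b)_e ≤ d(e, z) + 2 N(3,0)`. Hence each stratum
`X^(N)_e` satisfies the hyperbolicity inequality `(a·c)_e ≥ min((a·b)_e, (b·c)_e) - 6 N(3,0)`.
In `X^(N')_e` this makes equivalence of sequences transitive and shows that equivalent pairs of
sequences have liminf Gromov products differing by at most `12 N'(3,0)`. Every `N`-representative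
of a boundary point is an `N'`-representative of its image, which gives the lower bound and,
combined with the previous estimate, the upper bound.
-/

section MorseStrata

variable {X : Type*} [MetricSpace X]

lemma gprod_nonneg (w x y : X) : 0 ≤ gprod w x y := by
  unfold gprod
  linarith [dist_triangle x w y, dist_comm x w]

lemma gprod_comm (w x y : X) : gprod w x y = gprod w y x := by
  unfold gprod
  rw [dist_comm x y, add_comm (dist w x)]

lemma gprod_le_dist_left (w x y : X) : gprod w x y ≤ dist w x := by
  unfold gprod
  linarith [dist_triangle w x y]

lemma add_div_three_le_dist_of_dist_le {w p z q : X}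
    (hp : dist w p + dist p z = dist w z) (hz : dist w z ≤ dist w q) :
    (dist p z + dist z q) / 3 ≤ dist p q := by
  have hfar : dist p z ≤ dist p q := by linarith [dist_triangle w p q]
  have hback : dist z q - dist p z ≤ dist p q := by linarith [dist_triangle z p q, dist_comm z p]
  rcases le_total (dist z q) (2 * dist p z) with h | h <;> linarith

lemma isQuasiGeodesicOn_of_le {K C : ℝ} {I : Set ℝ} {σ : ℝ → X}
    (h : ∀ s ∈ I, ∀ t ∈ I, s ≤ t →
      (t - s) / K - C ≤ dist (σ s) (σ t) ∧ dist (σ s) (σ t) ≤ K * (t - s) + C) :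
    IsQuasiGeodesicOn K C I σ := by
  intro s hs t ht
  rcases le_total s t with hst | hts
  · rw [abs_sub_comm, abs_of_nonneg (sub_nonneg.2 hst)]
    exact h s hs t ht hst
  · rw [abs_of_nonneg (sub_nonneg.2 hts), dist_comm]
    exact h t ht s hs hts

lemma IsMorseSet.nonneg {N : ℝ → ℝ → ℝ} {G : Set X} (hG : IsMorseSet N G) (hne : G.Nonempty)
    {K C : ℝ} (hK : 1 ≤ K) (hC : 0 ≤ C) : 0 ≤ N K C := by
  obtain ⟨g, hg⟩ := hne
  have hconst : IsQuasiGeodesicOn K C (Icc 0 0) (fun _ => g) := fun s hs t ht => by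
    obtain rfl : s = 0 := le_antisymm hs.2 hs.1
    obtain rfl : t = 0 := le_antisymm ht.2 ht.1
    simp [hC]
  obtain ⟨_, _, hdist⟩ := hG K C hK hC 0 0 le_rfl _ hconst hg hg 0 ⟨le_rfl, le_rfl⟩
  exact dist_nonneg.trans hdist

lemma IsMorseSet.mono {N N' : ℝ → ℝ → ℝ} {G : Set X} (hG : IsMorseSet N G)
    (hle : ∀ K C : ℝ, N K C ≤ N' K C) : IsMorseSet N' G :=
  fun K C hK hC a b hab σ hσ ha hb s hs =>
    (hG K C hK hC a b hab σ hσ ha hb s hs).imp fun _ hg => ⟨hg.1, hg.2.trans (hle K C)⟩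

lemma morseStratum_mono {N N' : ℝ → ℝ → ℝ} (hle : ∀ K C : ℝ, N K C ≤ N' K C) (e : X) :
    morseStratum N e ⊆ morseStratum N' e :=
  fun _ ⟨γ, hγ, hmorse⟩ => ⟨γ, hγ, hmorse.mono hle⟩

namespace IsGeodesicFromTo

variable {γ : ℝ → X} {x y : X}

lemma dist_eq (hγ : IsGeodesicFromTo γ x y) {s t : ℝ} (hs : s ∈ Icc 0 (dist x y))
    (ht : t ∈ Icc 0 (dist x y)) : dist (γ s) (γ t) = |s - t| :=
  hγ.1.2 s hs t ht

lemma dist_left (hγ : IsGeodesicFromTo γ x y) {s : ℝ} (hs : s ∈ Icc 0 (dist x y)) :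
    dist x (γ s) = s := by
  rw [← hγ.2.1, hγ.dist_eq ⟨le_rfl, dist_nonneg⟩ hs, zero_sub, abs_neg, abs_of_nonneg hs.1]

lemma dist_right (hγ : IsGeodesicFromTo γ x y) {s : ℝ} (hs : s ∈ Icc 0 (dist x y)) :
    dist (γ s) y = dist x y - s := by
  conv_lhs => rw [← hγ.2.2]
  rw [hγ.dist_eq hs ⟨dist_nonneg, le_rfl⟩, abs_sub_comm, abs_of_nonneg (sub_nonneg.2 hs.2)]

lemma reverse (hγ : IsGeodesicFromTo γ x y) :
    IsGeodesicFromTo (fun s => γ (dist x y - s)) y x := by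
  have hmem : ∀ s ∈ Icc 0 (dist y x), dist x y - s ∈ Icc 0 (dist x y) := fun s hs => by
    rw [dist_comm] at hs
    exact ⟨by linarith [hs.2], by linarith [hs.1]⟩
  refine ⟨⟨dist_nonneg, fun s hs t ht => ?_⟩, by simpa using hγ.2.2, ?_⟩
  · rw [hγ.dist_eq (hmem s hs) (hmem t ht), ← abs_neg]
    ring_nf
  · simpa [dist_comm y x] using hγ.2.1

lemma exists_forall_dist_le (hγ : IsGeodesicFromTo γ x y) (w : X) :
    ∃ μ ∈ Icc 0 (dist x y), ∀ m ∈ Icc 0 (dist x y), dist w (γ μ) ≤ dist w (γ m) := by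
  have hcont : ContinuousOn (fun m => dist w (γ m)) (Icc 0 (dist x y)) := by
    refine (LipschitzOnWith.of_dist_le_mul (K := 1) fun s hs t ht => ?_).continuousOn
    rw [NNReal.coe_one, one_mul, Real.dist_eq, Real.dist_eq, ← hγ.dist_eq hs ht,
      dist_comm w, dist_comm w]
    exact abs_dist_sub_le _ _ _
  exact isCompact_Icc.exists_isMinOn ⟨0, le_rfl, dist_nonneg⟩ hcont

lemma dist_le_two_mul_of_dist_le (hγ : IsGeodesicFromTo γ x y) {p : X} {s w n : ℝ}
    (hs : s ∈ Icc 0 (dist x y)) (hw : w ∈ Icc 0 (dist x y)) (hp : dist x p = s)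
    (hpw : dist p (γ w) ≤ n) : dist (γ s) p ≤ 2 * n := by
  have hlevel : |s - w| ≤ n := by
    rw [← hp, ← hγ.dist_left hw, dist_comm x p, dist_comm x (γ w)]
    exact (abs_dist_sub_le p (γ w) x).trans hpw
  calc dist (γ s) p ≤ dist (γ s) (γ w) + dist (γ w) p := dist_triangle _ _ _
    _ ≤ n + n := add_le_add ((hγ.dist_eq hs hw).trans_le hlevel) (by rwa [dist_comm])
    _ = 2 * n := by ring

end IsGeodesicFromTo

lemma gprod_le_add_of_dist_le {α β : ℝ → X} {e a b z : X} {s n : ℝ}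
    (hα : IsGeodesicFromTo α e a) (hβ : IsGeodesicFromTo β e b)
    (hz : dist a z + dist z b = dist a b) (ha : s ∈ Icc 0 (dist e a))
    (hb : s ∈ Icc 0 (dist e b)) (hαz : dist (α s) z ≤ n) (hβz : dist (β s) z ≤ n) :
    gprod e a b ≤ s + n := by
  unfold gprod
  linarith [dist_triangle (α s) z a, dist_comm z a, dist_triangle (β s) z b,
    hα.dist_right ha, hβ.dist_right hb]

noncomputable def concatPath {α : Type*} (J τ : ℝ → α) (l μ : ℝ) (s : ℝ) : α :=
  if s ≤ l then J s else τ (μ + (s - l))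

lemma concatPath_of_le {α : Type*} {J τ : ℝ → α} {l μ s : ℝ} (hs : s ≤ l) :
    concatPath J τ l μ s = J s :=
  if_pos hs

lemma concatPath_of_lt {α : Type*} {J τ : ℝ → α} {l μ s : ℝ} (hs : l < s) :
    concatPath J τ l μ s = τ (μ + (s - l)) :=
  if_neg (not_le.2 hs)

lemma isQuasiGeodesicOn_concatPath {τ J : ℝ → X} {w x y z : X} {μ : ℝ}
    (hτ : IsGeodesicFromTo τ x y) (hμ : μ ∈ Icc 0 (dist x y)) (hz : τ μ = z)
    (hmin : ∀ m ∈ Icc 0 (dist x y), dist w z ≤ dist w (τ m)) (hJ : IsGeodesicFromTo J w z) :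
    IsQuasiGeodesicOn 3 0 (Icc 0 (dist w z + (dist x y - μ))) (concatPath J τ (dist w z) μ) := by
  set lam := dist w z
  have hτmem : ∀ s ∈ Icc 0 (lam + (dist x y - μ)), lam ≤ s → μ + (s - lam) ∈ Icc 0 (dist x y) :=
    fun s hs hls => ⟨by linarith [hμ.1], by linarith [hs.2]⟩
  refine isQuasiGeodesicOn_of_le fun s hs t ht hst => ?_
  rcases le_or_gt t lam with htl | hlt
  · have hd : dist (concatPath J τ lam μ s) (concatPath J τ lam μ t) = t - s := by
      rw [concatPath_of_le (hst.trans htl), concatPath_of_le htl,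
        hJ.dist_eq ⟨hs.1, hst.trans htl⟩ ⟨ht.1, htl⟩, abs_sub_comm,
        abs_of_nonneg (sub_nonneg.2 hst)]
    constructor <;> linarith
  rcases le_or_gt s lam with hsl | hls
  · have hm := hτmem t ht hlt.le
    have hpz : dist (J s) z = lam - s := hJ.dist_right ⟨hs.1, hsl⟩
    have hzq : dist z (τ (μ + (t - lam))) = t - lam := by
      rw [← hz, hτ.dist_eq hμ hm, abs_sub_comm, abs_of_nonneg (by linarith)]
      ring
    have hlow := add_div_three_le_dist_of_dist_le (q := τ (μ + (t - lam)))
      (by rw [hJ.dist_left ⟨hs.1, hsl⟩, hpz]; ring) (hmin _ hm)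
    have hup := dist_triangle (J s) z (τ (μ + (t - lam)))
    rw [hpz, hzq] at hlow hup
    rw [concatPath_of_le hsl, concatPath_of_lt hlt]
    constructor <;> linarith
  · have hd : dist (concatPath J τ lam μ s) (concatPath J τ lam μ t) = t - s := by
      rw [concatPath_of_lt hls, concatPath_of_lt hlt,
        hτ.dist_eq (hτmem s hs hls.le) (hτmem t ht hlt.le), abs_sub_comm,
        ← abs_of_nonneg (sub_nonneg.2 hst)]
      ring_nf
    constructor <;> linarith

lemma exists_isQuasiGeodesicOn_through_closest_point {τ J : ℝ → X} {w x y z : X} {μ : ℝ}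
    (hτ : IsGeodesicFromTo τ x y) (hμ : μ ∈ Icc 0 (dist x y)) (hz : τ μ = z)
    (hmin : ∀ m ∈ Icc 0 (dist x y), dist w z ≤ dist w (τ m)) (hJ : IsGeodesicFromTo J w z) :
    ∃ Φ : ℝ → X, ∃ T, dist w z ≤ T ∧ IsQuasiGeodesicOn 3 0 (Icc 0 T) Φ ∧
      Φ 0 = w ∧ Φ T = y ∧ EqOn Φ J (Icc 0 (dist w z)) := by
  refine ⟨concatPath J τ (dist w z) μ, dist w z + (dist x y - μ), by linarith [hμ.2],
    isQuasiGeodesicOn_concatPath hτ hμ hz hmin hJ, ?_, ?_, fun s hs => concatPath_of_le hs.2⟩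
  · rw [concatPath_of_le dist_nonneg, hJ.2.1]
  · rcases eq_or_lt_of_le hμ.2 with hμD | hμD
    · rw [hμD, sub_self, add_zero, concatPath_of_le le_rfl, hJ.2.2, ← hz, hμD, hτ.2.2]
    · rw [concatPath_of_lt (by linarith), add_sub_cancel_left, add_sub_cancel, hτ.2.2]

namespace IsMorseGeodesicFromTo

variable {N : ℝ → ℝ → ℝ} {β : ℝ → X} {x y : X}

lemma dist_le_of_isQuasiGeodesicOn (hβ : IsMorseGeodesicFromTo N β x y) {K C T s : ℝ}
    {Φ : ℝ → X} (hK : 1 ≤ K) (hC : 0 ≤ C) (hT : 0 ≤ T) (hΦ : IsQuasiGeodesicOn K C (Icc 0 T) Φ)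
    (hΦ0 : Φ 0 = x) (hΦT : Φ T = y) (hs : s ∈ Icc 0 T) (hsy : dist x (Φ s) ≤ dist x y) :
    dist (β (dist x (Φ s))) (Φ s) ≤ 2 * N K C := by
  have hstart : Φ 0 ∈ β '' Icc 0 (dist x y) :=
    ⟨0, ⟨le_rfl, dist_nonneg⟩, hβ.1.2.1.trans hΦ0.symm⟩
  have hend : Φ T ∈ β '' Icc 0 (dist x y) :=
    ⟨_, ⟨dist_nonneg, le_rfl⟩, hβ.1.2.2.trans hΦT.symm⟩
  obtain ⟨_, ⟨w, hw, rfl⟩, hdist⟩ := hβ.2 K C hK hC 0 T hT Φ hΦ hstart hend s hs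
  exact hβ.1.dist_le_two_mul_of_dist_le ⟨dist_nonneg, hsy⟩ hw rfl hdist

lemma dist_le_of_add_le_gprod (hX : GeodesicSpace X) {α : ℝ → X} {e a b : X}
    (hα : IsMorseGeodesicFromTo N α e a) (hβ : IsMorseGeodesicFromTo N β e b) {t : ℝ}
    (ht0 : 0 ≤ t) (ht : t + 2 * N 3 0 ≤ gprod e a b) :
    dist (α t) (β t) ≤ 4 * N 3 0 := by
  obtain ⟨τ, hτ⟩ := hX a b
  obtain ⟨μ, hμ, hmin⟩ := hτ.exists_forall_dist_le e
  obtain ⟨J, hJ⟩ := hX e (τ μ)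
  set z := τ μ with hz
  set lam := dist e z
  have hlam_a : lam ≤ dist e a := by simpa [hτ.2.1] using hmin 0 ⟨le_rfl, dist_nonneg⟩
  have hlam_b : lam ≤ dist e b := by simpa [hτ.2.2] using hmin _ ⟨dist_nonneg, le_rfl⟩
  have htrack : ∀ {c : X} {γ : ℝ → X}, IsMorseGeodesicFromTo N γ e c → lam ≤ dist e c →
      (∃ Φ : ℝ → X, ∃ T, lam ≤ T ∧ IsQuasiGeodesicOn 3 0 (Icc 0 T) Φ ∧
        Φ 0 = e ∧ Φ T = c ∧ EqOn Φ J (Icc 0 lam)) →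
      ∀ s ∈ Icc 0 lam, dist (γ s) (J s) ≤ 2 * N 3 0 := by
    rintro c γ hγ hlam ⟨Φ, T, hT, hΦ, hΦ0, hΦT, hΦJ⟩ s hs
    have h := hγ.dist_le_of_isQuasiGeodesicOn (by norm_num) le_rfl (dist_nonneg.trans hT) hΦ
      hΦ0 hΦT ⟨hs.1, hs.2.trans hT⟩
    rw [hΦJ hs, hJ.dist_left hs] at h
    exact h (hs.2.trans hlam)
  have hβJ := htrack hβ hlam_b
    (exists_isQuasiGeodesicOn_through_closest_point hτ hμ rfl hmin hJ)
  have hαJ : ∀ s ∈ Icc 0 lam, dist (α s) (J s) ≤ 2 * N 3 0 := by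
    refine htrack hα hlam_a (exists_isQuasiGeodesicOn_through_closest_point hτ.reverse
      (μ := dist a b - μ) ?_ (by simp only [sub_sub_cancel, hz]) (fun m hm => ?_) hJ)
    · rw [dist_comm b a]
      exact ⟨by linarith [hμ.2], by linarith [hμ.1]⟩
    · rw [dist_comm b a] at hm
      exact hmin _ ⟨by linarith [hm.2], by linarith [hm.1]⟩
  have hgprod : gprod e a b ≤ lam + 2 * N 3 0 := by
    have hJz : J lam = z := hJ.2.2
    refine gprod_le_add_of_dist_le hα.1 hβ.1 ?_ ⟨dist_nonneg, hlam_a⟩ ⟨dist_nonneg, hlam_b⟩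
      (hJz ▸ hαJ lam ⟨dist_nonneg, le_rfl⟩) (hJz ▸ hβJ lam ⟨dist_nonneg, le_rfl⟩)
    rw [hτ.dist_left hμ, hτ.dist_right hμ]
    ring
  have htlam : t ∈ Icc 0 lam := ⟨ht0, by linarith⟩
  calc dist (α t) (β t) ≤ dist (α t) (J t) + dist (β t) (J t) := dist_triangle_right _ _ _
    _ ≤ 2 * N 3 0 + 2 * N 3 0 := add_le_add (hαJ t htlam) (hβJ t htlam)
    _ = 4 * N 3 0 := by ring

end IsMorseGeodesicFromTo

section Stratum

variable {N : ℝ → ℝ → ℝ} {e : X}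

lemma nonneg_of_mem_morseStratum {y : X} (hy : y ∈ morseStratum N e) {K C : ℝ} (hK : 1 ≤ K)
    (hC : 0 ≤ C) : 0 ≤ N K C := by
  obtain ⟨γ, hγ⟩ := hy
  exact hγ.2.nonneg ⟨γ 0, 0, ⟨le_rfl, dist_nonneg⟩, rfl⟩ hK hC

lemma min_gprod_sub_le_gprod (hX : GeodesicSpace X) {a b c : X} (ha : a ∈ morseStratum N e)
    (hb : b ∈ morseStratum N e) (hc : c ∈ morseStratum N e) :
    min (gprod e a b) (gprod e b c) - 6 * N 3 0 ≤ gprod e a c := by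
  have hN := nonneg_of_mem_morseStratum ha (K := 3) (by norm_num) le_rfl
  set t := min (gprod e a b) (gprod e b c) - 2 * N 3 0
  suffices t - 4 * N 3 0 ≤ gprod e a c by linarith
  rcases lt_or_ge t 0 with ht0 | ht0
  · linarith [gprod_nonneg e a c]
  obtain ⟨α, hα⟩ := ha
  obtain ⟨β, hβ⟩ := hb
  obtain ⟨γ, hγ⟩ := hc
  have hab : t + 2 * N 3 0 ≤ gprod e a b := by linarith [min_le_left (gprod e a b) (gprod e b c)]
  have hbc : t + 2 * N 3 0 ≤ gprod e b c := by linarith [min_le_right (gprod e a b) (gprod e b c)]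
  have hta : t ≤ dist e a := by linarith [gprod_le_dist_left e a b]
  have htc : t ≤ dist e c := by linarith [gprod_le_dist_left e c b, gprod_comm e b c]
  have hαβ := hα.dist_le_of_add_le_gprod hX hβ ht0 hab
  have hβγ := hβ.dist_le_of_add_le_gprod hX hγ ht0 hbc
  have hac : dist a c ≤ (dist e a - t) + 8 * N 3 0 + (dist e c - t) := by
    rw [← hα.1.dist_right ⟨ht0, hta⟩, ← hγ.1.dist_right ⟨ht0, htc⟩]
    linarith [dist_triangle4 a (α t) (γ t) c, dist_comm a (α t),
      dist_triangle (α t) (β t) (γ t)]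
  unfold gprod
  linarith

end Stratum

section SequentialBoundary

variable {e : X} {f g h : ℕ → X}

lemma equivAtInf_iff :
    EquivAtInf e f g ↔ ∀ r : ℝ, ∃ I, ∀ n ≥ I, ∀ m ≥ I, r ≤ gprod e (f n) (g m) := by
  refine ⟨fun hfg r => ?_, fun hfg => tendsto_atTop.2 fun r => ?_⟩
  · obtain ⟨⟨I, J⟩, hIJ⟩ := eventually_atTop.1 (tendsto_atTop.1 hfg r)
    exact ⟨max I J, fun n hn m hm => hIJ (n, m) ⟨le_of_max_le_left hn, le_of_max_le_right hm⟩⟩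
  · obtain ⟨I, hI⟩ := hfg r
    exact eventually_atTop.2 ⟨(I, I), fun p hp => hI p.1 hp.1 p.2 hp.2⟩

lemma EquivAtInf.symm (hfg : EquivAtInf e f g) : EquivAtInf e g f := by
  refine equivAtInf_iff.2 fun r => ?_
  obtain ⟨I, hI⟩ := equivAtInf_iff.1 hfg r
  exact ⟨I, fun n hn m hm => (hI m hm n hn).trans_eq (gprod_comm _ _ _)⟩

lemma EquivAtInf.trans (hX : GeodesicSpace X) {N : ℝ → ℝ → ℝ}
    (hf : ∀ n, f n ∈ morseStratum N e) (hg : ∀ n, g n ∈ morseStratum N e)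
    (hh : ∀ n, h n ∈ morseStratum N e) (hfg : EquivAtInf e f g) (hgh : EquivAtInf e g h) :
    EquivAtInf e f h := by
  refine equivAtInf_iff.2 fun r => ?_
  obtain ⟨I, hI⟩ := equivAtInf_iff.1 hfg (r + 6 * N 3 0)
  obtain ⟨J, hJ⟩ := equivAtInf_iff.1 hgh (r + 6 * N 3 0)
  refine ⟨max I J, fun n hn m hm => ?_⟩
  have hmin := le_min (hI n (le_of_max_le_left hn) _ (le_max_left I J))
    (hJ _ (le_max_right I J) m (le_of_max_le_right hm))
  linarith [min_gprod_sub_le_gprod hX (hf n) (hg (max I J)) (hh m)]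

lemma SeqBoundary.equivAtInf_of_mk_eq (hX : GeodesicSpace X) {N : ℝ → ℝ → ℝ}
    {u v : BSeq (morseStratum N e) e} (huv : SeqBoundary.mk u = SeqBoundary.mk v) :
    EquivAtInf e u.1 v.1 := by
  obtain hgen := Quot.eqvGen_exact huv
  clear huv
  induction hgen with
  | rel _ _ h => exact h
  | refl u => exact u.2.2
  | symm _ _ _ ih => exact ih.symm
  | trans u v w _ _ ih₁ ih₂ => exact ih₁.trans hX u.2.1 v.2.1 w.2.1 ih₂

lemma seqGP_le_seqGP_add (hX : GeodesicSpace X) {N : ℝ → ℝ → ℝ} {f' g' : ℕ → X}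
    (hf : ∀ n, f n ∈ morseStratum N e) (hg : ∀ n, g n ∈ morseStratum N e)
    (hf' : ∀ n, f' n ∈ morseStratum N e) (hg' : ∀ n, g' n ∈ morseStratum N e)
    (hff' : EquivAtInf e f f') (hgg' : EquivAtInf e g g') :
    seqGP e f' g' ≤ seqGP e f g + ((12 * N 3 0 : ℝ) : EReal) := by
  have hN := nonneg_of_mem_morseStratum (hf 0) (K := 3) (by norm_num) le_rfl
  refine EReal.ge_of_forall_gt_iff_ge.1 fun r hr => ?_
  obtain ⟨⟨I₀, J₀⟩, hr'⟩ := eventually_atTop.1 (eventually_lt_of_lt_liminf hr)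
  obtain ⟨I₁, hI₁⟩ := equivAtInf_iff.1 hff' r
  obtain ⟨I₂, hI₂⟩ := equivAtInf_iff.1 hgg' r
  obtain ⟨k, hk₀, hk₀', hk₁, hk₂⟩ : ∃ k, I₀ ≤ k ∧ J₀ ≤ k ∧ I₁ ≤ k ∧ I₂ ≤ k :=
    ⟨I₀ + J₀ + I₁ + I₂, by omega, by omega, by omega, by omega⟩
  have hk : r ≤ gprod e (f' k) (g' k) := (EReal.coe_lt_coe_iff.1 (hr' (k, k) ⟨hk₀, hk₀'⟩)).le
  have hlow : ((r - 12 * N 3 0 : ℝ) : EReal) ≤ seqGP e f g := by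
    refine le_liminf_of_le (by isBoundedDefault) (eventually_atTop.2 ⟨(k, k), fun p hp => ?_⟩)
    have hff := hI₁ p.1 (hk₁.trans hp.1) k hk₁
    have hgg := (hI₂ p.2 (hk₂.trans hp.2) k hk₂).trans_eq (gprod_comm _ _ _)
    have h₁ := min_gprod_sub_le_gprod hX (hf p.1) (hf' k) (hg' k)
    have h₂ := min_gprod_sub_le_gprod hX (hf p.1) (hg' k) (hg p.2)
    have hfg' : r - 6 * N 3 0 ≤ gprod e (f p.1) (g' k) := by linarith [le_min hff hk]
    have hgg' : r - 6 * N 3 0 ≤ gprod e (g' k) (g p.2) := by linarith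
    exact EReal.coe_le_coe_iff.2 (by linarith [le_min hfg' hgg'])
  calc (r : EReal) = ((r - 12 * N 3 0 : ℝ) : EReal) + ((12 * N 3 0 : ℝ) : EReal) := by
        rw [← EReal.coe_add, sub_add_cancel]
    _ ≤ seqGP e f g + ((12 * N 3 0 : ℝ) : EReal) := by gcongr

def BSeq.ofSubset {S T : Set X} (hST : S ⊆ T) (f : BSeq S e) : BSeq T e :=
  ⟨f.1, fun n => hST (f.2.1 n), f.2.2⟩

end SequentialBoundary

end MorseStrata

theorem statement6_general {X : Type*} [MetricSpace X] (hX : GeodesicSpace X) (e : X)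
    (N N' : ℝ → ℝ → ℝ)
    (hle : ∀ K C : ℝ, N K C ≤ N' K C)
    (ι : SeqBoundary (morseStratum N e) e → SeqBoundary (morseStratum N' e) e)
    (hι : ∀ (f : BSeq (morseStratum N e) e) (g : BSeq (morseStratum N' e) e),
        (∀ n, g.1 n = f.1 n) → ι (SeqBoundary.mk f) = SeqBoundary.mk g) :
    ∀ ξ η : SeqBoundary (morseStratum N e) e,
      bGP (morseStratum N e) e ξ η ≤ bGP (morseStratum N' e) e (ι ξ) (ι η) ∧
      bGP (morseStratum N' e) e (ι ξ) (ι η) ≤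
        bGP (morseStratum N e) e ξ η + ((32 * N' 3 0 : ℝ) : EReal) := by
  intro ξ η
  have hsub := morseStratum_mono hle e
  have hιmk : ∀ f, ι (SeqBoundary.mk f) = SeqBoundary.mk (f.ofSubset hsub) :=
    fun f => hι f _ fun _ => rfl
  constructor
  · refine sSup_le ?_
    rintro _ ⟨f, g, rfl, rfl, rfl⟩
    exact le_sSup ⟨f.ofSubset hsub, g.ofSubset hsub, (hιmk f).symm, (hιmk g).symm, rfl⟩
  · refine sSup_le ?_
    rintro _ ⟨f', g', hf', hg', rfl⟩
    obtain ⟨f, rfl⟩ := Quot.exists_rep ξ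
    obtain ⟨g, rfl⟩ := Quot.exists_rep η
    have hN' : 0 ≤ N' 3 0 := nonneg_of_mem_morseStratum (f'.2.1 0) (by norm_num) le_rfl
    have hff' := SeqBoundary.equivAtInf_of_mk_eq hX ((hιmk f).symm.trans hf'.symm)
    have hgg' := SeqBoundary.equivAtInf_of_mk_eq hX ((hιmk g).symm.trans hg'.symm)
    have hfg : seqGP e f.1 g.1 ≤ bGP (morseStratum N e) e (Quot.mk _ f) (Quot.mk _ g) :=
      le_sSup ⟨f, g, rfl, rfl, rfl⟩
    calc seqGP e f'.1 g'.1 ≤ seqGP e f.1 g.1 + ((12 * N' 3 0 : ℝ) : EReal) :=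
          seqGP_le_seqGP_add hX (f.ofSubset hsub).2.1 (g.ofSubset hsub).2.1 f'.2.1 g'.2.1
            hff' hgg'
      _ ≤ _ := add_le_add hfg (EReal.coe_le_coe_iff.2 (by linarith))

/-- for `N ≤ N'` and the induced boundary map `ι`, the Gromov
products satisfy `(x·y)^N ≤ (ιx·ιy)^{N'} ≤ (x·y)^N + 32·N'(3,0)`. -/
theorem statement6 {X : Type*} [MetricSpace X] (hX : GeodesicSpace X) (e : X)
    (N N' : ℝ → ℝ → ℝ) (hN : IsMorseGauge N) (hN' : IsMorseGauge N')
    (hle : ∀ K C : ℝ, N K C ≤ N' K C)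
    (ι : SeqBoundary (morseStratum N e) e → SeqBoundary (morseStratum N' e) e)
    (hι : ∀ (f : BSeq (morseStratum N e) e) (g : BSeq (morseStratum N' e) e),
        (∀ n, g.1 n = f.1 n) → ι (SeqBoundary.mk f) = SeqBoundary.mk g) :
    ∀ ξ η : SeqBoundary (morseStratum N e) e,
      bGP (morseStratum N e) e ξ η ≤ bGP (morseStratum N' e) e (ι ξ) (ι η) ∧
      bGP (morseStratum N' e) e (ι ξ) (ι η) ≤
        bGP (morseStratum N e) e ξ η + ((32 * N' 3 0 : ℝ) : EReal) :=
  statement6_general hX e N N' hle ι hι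
end
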